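/- arXiv:1010.3426 — 6 statements merged into one kernel-verified Lean document; each statement's English description precedes it below -/
import Mathlib

section
/- For positive reals d1, d2, the equation r1 = r2, where r1 = 1/(2x1) - c*x2/(2 d1 x1^2), r2 = 1/(2x2) + c*(x2/(4 d2 x1^2) - 1/(d2 x2)) with c = d1*d2/(d1+4*d2), restricted to x1 = 1 and x2 > 0, has exactly two solutions: x2 = 2 and x2 = 4*d2/(d1+2*d2). -/
/-! With `c = d₁d₂/(d₁ + 4d₂)`, clearing the denominator `4(d₁ + 4d₂)x₂` turns `r₁ - r₂` into the
quadratic `-(x₂ - 2)((d₁ + 2d₂)x₂ - 4d₂)`, whose two roots are both positive. -/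

lemma einstein_residual_eq {d1 d2 c x : ℝ} (hd1 : d1 ≠ 0) (hd2 : d2 ≠ 0) (hD : d1 + 4 * d2 ≠ 0)
    (hc : c * (d1 + 4 * d2) = d1 * d2) (hx : x ≠ 0) :
    (1 / 2 - c * x / (2 * d1)) - (1 / (2 * x) + c * (x / (4 * d2) - 1 / (2 * d2 * x))) =
      -((x - 2) * ((d1 + 2 * d2) * x - 4 * d2)) / (4 * (d1 + 4 * d2) * x) := by
  rw [eq_div_iff (by simp [hD, hx])]
  field_simp
  linear_combination (4 * d1 - 2 * x ^ 2 * (d1 + 2 * d2)) * hc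

lemma einstein_eq_iff {d1 d2 x : ℝ} (hd1 : 0 < d1) (hd2 : 0 < d2) (hx : x ≠ 0) :
    1 / 2 - d1 * d2 / (d1 + 4 * d2) * x / (2 * d1) =
        1 / (2 * x) + d1 * d2 / (d1 + 4 * d2) * (x / (4 * d2) - 1 / (2 * d2 * x)) ↔
      x = 2 ∨ x = 4 * d2 / (d1 + 2 * d2) := by
  have hD : d1 + 4 * d2 ≠ 0 := by positivity
  have hE : d1 + 2 * d2 ≠ 0 := by positivity
  rw [← sub_eq_zero, einstein_residual_eq hd1.ne' hd2.ne' hD (div_mul_cancel₀ _ hD) hx,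
    div_eq_zero_iff, or_iff_left (by positivity), neg_eq_zero, mul_eq_zero, sub_eq_zero,
    sub_eq_zero, eq_div_iff hE, mul_comm x]

/-- The normalized Einstein equation r1 = r2 with x1 = 1 has exactly the two
positive solutions x2 = 2 and x2 = 4 d2/(d1 + 2 d2). -/
theorem stmt_2 (d1 d2 : ℝ) (hd1 : 0 < d1) (hd2 : 0 < d2) :
    let c := d1 * d2 / (d1 + 4 * d2)
    {x2 : ℝ | 0 < x2 ∧
      1 / (2 * (1:ℝ)) - c * x2 / (2 * d1 * 1 ^ 2) =
        1 / (2 * x2) + c * (x2 / (4 * d2 * 1 ^ 2) - 1 / (2 * d2 * x2))} =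
      {2, 4 * d2 / (d1 + 2 * d2)} := by
  ext x
  simp only [one_pow, mul_one, Set.mem_ofPred_eq, Set.mem_insert_iff, Set.mem_singleton_iff]
  constructor
  · rintro ⟨hx, heq⟩
    exact (einstein_eq_iff hd1 hd2 hx.ne').1 heq
  · intro hroot
    have hx : 0 < x := by rcases hroot with rfl | rfl <;> positivity
    exact ⟨hx, (einstein_eq_iff hd1 hd2 hx.ne').2 hroot⟩
end

section
/- Let d1, d2 > 0 and consider the planar polynomial vector field P(x1,x2) = 8 d2^2 x1^2 + 2(2d1+d2)(d1+4d2) x1 x2 - d2(3d1+2d2) x2^2, Q(x1,x2) = (4 d2 x1 + d1 x2)(4 d2 x1 + d1(2x1 + x2)). Then the only zero of (P,Q) in the closed first quadrant is the origin (0,0). -/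
theorem eq_zero_and_eq_zero_of_mul_add_mul_eq_zero {R : Type*} [Field R] [LinearOrder R]
    [IsStrictOrderedRing R] {a b x y : R} (ha : 0 < a) (hb : 0 < b) (hx : 0 ≤ x) (hy : 0 ≤ y)
    (h : a * x + b * y = 0) : x = 0 ∧ y = 0 := by
  obtain ⟨hax, hby⟩ := (add_eq_zero_iff_of_nonneg (mul_nonneg ha.le hx) (mul_nonneg hb.le hy)).1 h
  exact ⟨(mul_eq_zero.1 hax).resolve_left ha.ne', (mul_eq_zero.1 hby).resolve_left hb.ne'⟩

theorem stmt_5_general (d1 d2 : ℝ) (hd1 : 0 < d1) (hd2 : 0 < d2) (x1 x2 : ℝ)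
    (hx1 : 0 ≤ x1) (hx2 : 0 ≤ x2)
    (hQ : (4 * d2 * x1 + d1 * x2) * (4 * d2 * x1 + d1 * (2 * x1 + x2)) = 0) :
    x1 = 0 ∧ x2 = 0 := by
  rcases mul_eq_zero.1 hQ with h | h
  · exact eq_zero_and_eq_zero_of_mul_add_mul_eq_zero (by positivity) hd1 hx1 hx2 h
  · exact eq_zero_and_eq_zero_of_mul_add_mul_eq_zero (a := 4 * d2 + 2 * d1) (by positivity) hd1
      hx1 hx2 (by linear_combination h)

/-- The rescaled normalized Ricci flow system for a flag manifold with two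
isotropy summands has no zero in the closed first quadrant except the origin. -/
theorem stmt_5 (d1 d2 : ℝ) (hd1 : 0 < d1) (hd2 : 0 < d2) (x1 x2 : ℝ)
    (hx1 : 0 ≤ x1) (hx2 : 0 ≤ x2)
    (hP : 8 * d2 ^ 2 * x1 ^ 2 + 2 * (2 * d1 + d2) * (d1 + 4 * d2) * x1 * x2 -
      d2 * (3 * d1 + 2 * d2) * x2 ^ 2 = 0)
    (hQ : (4 * d2 * x1 + d1 * x2) * (4 * d2 * x1 + d1 * (2 * x1 + x2)) = 0) :
    x1 = 0 ∧ x2 = 0 :=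
  stmt_5_general d1 d2 hd1 hd2 x1 x2 hx1 hx2 hQ
end

section
/- Let d1, d2 > 0. At z1* = 4 d2/(d1 + 2 d2), the derivative of F(z1) = (d1+d2)(z1-2) z1 (2 d2 (z1-2) + z1 d1) satisfies F'(z1*) < 0, so z1* is an attracting fixed point of dz1/dt = F(z1). -/
/-!
The right-hand side factors as `F z = (d₁ + d₂) z (z - 2) ((d₁ + 2 d₂) z - 4 d₂)`, so `z* = 4 d₂ / (d₁ + 2 d₂)`
is a simple root of the last factor and `F'(z*) = (d₁ + d₂) (z* - 2) z* (d₁ + 2 d₂)`. Since `0 < z* < 2`,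
exactly one factor is negative.
-/

theorem HasDerivAt.mul_of_continuousAt_of_eq_zero {𝕜 : Type*} [NontriviallyNormedField 𝕜]
    {f g : 𝕜 → 𝕜} {g' x : 𝕜} (hf : ContinuousAt f x) (hg : HasDerivAt g g' x) (hgx : g x = 0) :
    HasDerivAt (fun y => f y * g y) (f x * g') x := by
  rw [hasDerivAt_iff_tendsto_slope] at hg ⊢
  have hslope : slope (fun y => f y * g y) x = fun y => f y * slope g x y := by
    ext y
    simp only [slope_def_field, hgx, mul_zero, sub_zero, mul_div_assoc]
  rw [hslope]
  exact (hf.tendsto.mono_left nhdsWithin_le_nhds).mul hg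

theorem div_add_two_mul_lt_two {a b : ℝ} (ha : 0 < a) (hb : 0 < b) : 4 * b / (a + 2 * b) < 2 := by
  rw [div_lt_iff₀ (by positivity)]
  linarith

/-- At z1* = 4 d2/(d1+2d2) the derivative of F is negative, so z1* is an
attracting fixed point of dz1/dt = F(z1). -/
theorem stmt_11 (d1 d2 : ℝ) (hd1 : 0 < d1) (hd2 : 0 < d2) :
    let F := fun z1 : ℝ =>
      (d1 + d2) * (z1 - 2) * z1 * (2 * d2 * (z1 - 2) + z1 * d1)
    deriv F (4 * d2 / (d1 + 2 * d2)) < 0 := by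
  intro F
  set z := 4 * d2 / (d1 + 2 * d2) with hz
  have hroot : 2 * d2 * (z - 2) + z * d1 = 0 := by
    rw [hz]
    field_simp
    ring
  have hlin : HasDerivAt (fun y => 2 * d2 * (y - 2) + y * d1) (2 * d2 + d1) z := by
    simpa using (((hasDerivAt_id z).sub_const 2).const_mul (2 * d2)).fun_add
      ((hasDerivAt_id z).mul_const d1)
  have hF := HasDerivAt.mul_of_continuousAt_of_eq_zero
    (f := fun y => (d1 + d2) * (y - 2) * y) (by fun_prop) hlin hroot
  rw [hF.deriv]
  have hz2 : z - 2 < 0 := sub_neg.2 (div_add_two_mul_lt_two hd1 hd2)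
  have hz0 : 0 < z := by positivity
  have hcoef : 0 < (d1 + d2) * z * (2 * d2 + d1) := by positivity
  nlinarith
end

section
/- At the fixed point (2,3) of the planar system dz1/dt = 10 z1 (288 (z1^2 - 1) + (512 - 768 z1 + 256 z1^2) z2 - 96 z2^2), dz2/dt = 640 z2 (-3 + 12 z1 + 2 (z1 - 6) z1 z2 + 3 z2^2), the Jacobian matrix has positive trace and positive determinant with real eigenvalues, hence (2,3) is a repelling node. -/
/-! The Jacobian at `(2, 3)` is upper triangular, `[[38400, -11520], [0, 3840]]`: `F₂(z₁, 3)`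
has a double root at `z₁ = 2`. Its eigenvalues are therefore the two positive diagonal entries. -/

theorem deriv_cubic (a₃ a₂ a₁ a₀ x : ℝ) :
    deriv (fun t : ℝ => a₃ * t ^ 3 + a₂ * t ^ 2 + a₁ * t + a₀) x =
      3 * a₃ * x ^ 2 + 2 * a₂ * x + a₁ := by
  have h := ((((hasDerivAt_pow 3 x).const_mul a₃).add
    ((hasDerivAt_pow 2 x).const_mul a₂)).add ((hasDerivAt_id x).const_mul a₁)).add_const a₀
  refine h.deriv.trans ?_
  norm_num
  ring

theorem deriv_eq_of_eq_cubic {f : ℝ → ℝ} (a₃ a₂ a₁ a₀ : ℝ)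
    (hf : ∀ t, f t = a₃ * t ^ 3 + a₂ * t ^ 2 + a₁ * t + a₀) (x : ℝ) :
    deriv f x = 3 * a₃ * x ^ 2 + 2 * a₂ * x + a₁ := by
  rw [funext hf, deriv_cubic]

theorem trace_pos_det_pos_discr_nonneg_of_upperTriangular {a d : ℝ} (b : ℝ) (ha : 0 < a) (hd : 0 < d) :
    0 < a + d ∧ 0 < a * d - b * 0 ∧ 0 ≤ (a + d) ^ 2 - 4 * (a * d - b * 0) := by
  refine ⟨by positivity, by simpa using mul_pos ha hd, ?_⟩
  nlinarith [sq_nonneg (a - d)]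

/-- At the fixed point (2,3), the Jacobian of the planar system has positive
trace, positive determinant, and nonnegative discriminant (real eigenvalues),
hence (2,3) is a repelling node. -/
theorem stmt_15 :
    let F1 := fun z1 z2 : ℝ =>
      10 * z1 * (288 * (z1 ^ 2 - 1) + (512 - 768 * z1 + 256 * z1 ^ 2) * z2 -
        96 * z2 ^ 2)
    let F2 := fun z1 z2 : ℝ =>
      640 * z2 * (-3 + 12 * z1 + 2 * (z1 - 6) * z1 * z2 + 3 * z2 ^ 2)
    let a := deriv (fun z1 => F1 z1 3) 2
    let b := deriv (fun z2 => F1 2 z2) 3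
    let c := deriv (fun z1 => F2 z1 3) 2
    let d := deriv (fun z2 => F2 2 z2) 3
    0 < a + d ∧ 0 < a * d - b * c ∧ 0 ≤ (a + d) ^ 2 - 4 * (a * d - b * c) := by
  intro F1 F2 a b c d
  have ha : a = 38400 :=
    (deriv_eq_of_eq_cubic 10560 (-23040) 3840 0 (fun t => by simp only [F1]; ring) 2).trans
      (by norm_num)
  have hc : c = 0 :=
    (deriv_eq_of_eq_cubic 0 11520 (-46080) 46080 (fun t => by simp only [F2]; ring) 2).trans
      (by norm_num)
  have hd : d = 3840 :=
    (deriv_eq_of_eq_cubic 1920 (-10240) 13440 0 (fun t => by simp only [F2]; ring) 3).trans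
      (by norm_num)
  rw [hc]
  exact trace_pos_det_pos_discr_nonneg_of_upperTriangular b (by rw [ha]; norm_num) (by rw [hd]; norm_num)
end

section
/- Let d1, d2, d3 > 0. The straight line ρ(t) = (t, 2t, 3t) is invariant under the flow of the three-dimensional polynomial system (\dot x1, \dot x2, \dot x3) given in (\ref{ricci3d}); precisely, at every point (t, 2t, 3t) with t > 0, the vector (\dot x1, \dot x2, \dot x3) is proportional to (1, 2, 3), i.e., \dot x2 = 2 \dot x1 and \dot x3 = 3 \dot x1 there. -/
theorem stmt_16_general (d1 d2 d3 : ℝ) :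
    let X1 := fun x1 x2 x3 : ℝ =>
      d2 * x1 * (2 * d3 * x1 * ((d1 + d2) * (d2 + d3) * x1 ^ 2 +
          d1 * (d1 + 4 * d2 + 9 * d3) * x1 * x2 -
          (d1 + d2) * (2 * d1 + d2 + d3) * x2 ^ 2) +
        (-(4 * d1 * (-(2 * d2 ^ 2) + d1 * d3 - 5 * d2 * d3)) * x1 ^ 2 +
          2 * d1 * (2 * d1 + d2 + d3) * (d1 + 4 * d2 + 9 * d3) * x1 * x2 -
          (3 * d1 + 2 * (d2 + d3)) * (-(d2 * d3) + d1 * (d2 + 2 * d3)) * x2 ^ 2) * x3 -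
        2 * (d1 + d2) * d3 * (2 * d1 + d2 + d3) * x1 * x3 ^ 2)
    let X2 := fun x1 x2 x3 : ℝ =>
      d1 * x2 * (2 * d3 * x1 * (-((d1 + d2) * (d1 + 2 * d2 + d3)) * x1 ^ 2 +
          d2 * (d1 + 4 * d2 + 9 * d3) * x1 * x2 +
          (d1 + d2) * (d1 + d3) * x2 ^ 2) +
        (-(4 * (d1 + 2 * d2 + d3) * (-(2 * d2 ^ 2) + d1 * d3 - 5 * d2 * d3)) * x1 ^ 2 +
          2 * d1 * d2 * (d1 + 4 * d2 + 9 * d3) * x1 * x2 +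
          (d1 + d3) * (-(d2 * d3) + d1 * (d2 + 2 * d3)) * x2 ^ 2) * x3 -
        2 * (d1 + d2) * d3 * (d1 + 2 * d2 + d3) * x1 * x3 ^ 2)
    let X3 := fun x1 x2 x3 : ℝ =>
      d1 * d2 * x3 * (-(2 * (d1 + d2 + 2 * d3)) * x1 * ((d1 + d2) * x1 ^ 2 -
          (d1 + 4 * d2 + 9 * d3) * x1 * x2 + (d1 + d2) * x2 ^ 2) +
        (4 * (2 * d2 ^ 2 - d1 * d3 + 5 * d2 * d3) * x1 ^ 2 +
          2 * d1 * (d1 + 4 * d2 + 9 * d3) * x1 * x2 +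
          (d2 * d3 - d1 * (d2 + 2 * d3)) * x2 ^ 2) * x3 +
        2 * (d1 + d2) ^ 2 * x1 * x3 ^ 2)
    ∀ t : ℝ, 0 < t →
      X2 t (2 * t) (3 * t) = 2 * X1 t (2 * t) (3 * t) ∧
      X3 t (2 * t) (3 * t) = 3 * X1 t (2 * t) (3 * t) := by
  intro X1 X2 X3 t _
  constructor <;> simp only [X1, X2, X3] <;> ring

/-- The line ρ(t) = (t, 2t, 3t) is invariant under the rescaled normalized
Ricci flow of a Type I flag manifold: at every point of the line with t > 0
the vector field is proportional to (1,2,3). -/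
theorem stmt_16 (d1 d2 d3 : ℝ) (hd1 : 0 < d1) (hd2 : 0 < d2) (hd3 : 0 < d3) :
    let X1 := fun x1 x2 x3 : ℝ =>
      d2 * x1 * (2 * d3 * x1 * ((d1 + d2) * (d2 + d3) * x1 ^ 2 +
          d1 * (d1 + 4 * d2 + 9 * d3) * x1 * x2 -
          (d1 + d2) * (2 * d1 + d2 + d3) * x2 ^ 2) +
        (-(4 * d1 * (-(2 * d2 ^ 2) + d1 * d3 - 5 * d2 * d3)) * x1 ^ 2 +
          2 * d1 * (2 * d1 + d2 + d3) * (d1 + 4 * d2 + 9 * d3) * x1 * x2 -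
          (3 * d1 + 2 * (d2 + d3)) * (-(d2 * d3) + d1 * (d2 + 2 * d3)) * x2 ^ 2) * x3 -
        2 * (d1 + d2) * d3 * (2 * d1 + d2 + d3) * x1 * x3 ^ 2)
    let X2 := fun x1 x2 x3 : ℝ =>
      d1 * x2 * (2 * d3 * x1 * (-((d1 + d2) * (d1 + 2 * d2 + d3)) * x1 ^ 2 +
          d2 * (d1 + 4 * d2 + 9 * d3) * x1 * x2 +
          (d1 + d2) * (d1 + d3) * x2 ^ 2) +
        (-(4 * (d1 + 2 * d2 + d3) * (-(2 * d2 ^ 2) + d1 * d3 - 5 * d2 * d3)) * x1 ^ 2 +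
          2 * d1 * d2 * (d1 + 4 * d2 + 9 * d3) * x1 * x2 +
          (d1 + d3) * (-(d2 * d3) + d1 * (d2 + 2 * d3)) * x2 ^ 2) * x3 -
        2 * (d1 + d2) * d3 * (d1 + 2 * d2 + d3) * x1 * x3 ^ 2)
    let X3 := fun x1 x2 x3 : ℝ =>
      d1 * d2 * x3 * (-(2 * (d1 + d2 + 2 * d3)) * x1 * ((d1 + d2) * x1 ^ 2 -
          (d1 + 4 * d2 + 9 * d3) * x1 * x2 + (d1 + d2) * x2 ^ 2) +
        (4 * (2 * d2 ^ 2 - d1 * d3 + 5 * d2 * d3) * x1 ^ 2 +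
          2 * d1 * (d1 + 4 * d2 + 9 * d3) * x1 * x2 +
          (d2 * d3 - d1 * (d2 + 2 * d3)) * x2 ^ 2) * x3 +
        2 * (d1 + d2) ^ 2 * x1 * x3 ^ 2)
    ∀ t : ℝ, 0 < t →
      X2 t (2 * t) (3 * t) = 2 * X1 t (2 * t) (3 * t) ∧
      X3 t (2 * t) (3 * t) = 3 * X1 t (2 * t) (3 * t) :=
  stmt_16_general d1 d2 d3
end

section
/- With (d1, d2, d3) = (4, 2, 4), the three-dimensional polynomial system (\dot x1, \dot x2, \dot x3) of the rescaled normalized Ricci flow on G2/U(2) has no zero with x1 > 0, x2 > 0, x3 > 0. -/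
/-!
Each component factors as `Xᵢ = cᵢ · xᵢ · cubicᵢ` with `cᵢ > 0` and `cubicᵢ` a homogeneous cubic, so a
zero in the open octant is a common zero of the three cubics there. That is impossible because
`15 x₁ cubic₁ + (40 x₂ + 8 x₃) cubic₂ + 8 x₃ cubic₃` has only nonnegative coefficients and contains
`135 x₁⁴`. The multipliers were found by linear programming.
-/

namespace G2U2

def cubic₁ (x1 x2 x3 : ℝ) : ℝ :=
  9 * x1 ^ 3 + 48 * x1 ^ 2 * x2 + 16 * x1 ^ 2 * x3 - 21 * x1 * x2 ^ 2 + 168 * x1 * x2 * x3 -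
    21 * x1 * x3 ^ 2 - 24 * x2 ^ 2 * x3

def cubic₂ (x1 x2 x3 : ℝ) : ℝ :=
  -9 * x1 ^ 3 + 12 * x1 ^ 2 * x2 + 24 * x1 ^ 2 * x3 + 6 * x1 * x2 ^ 2 + 12 * x1 * x2 * x3 -
    9 * x1 * x3 ^ 2 + 4 * x2 ^ 2 * x3

def cubic₃ (x1 x2 x3 : ℝ) : ℝ :=
  -21 * x1 ^ 3 + 168 * x1 ^ 2 * x2 + 16 * x1 ^ 2 * x3 - 21 * x1 * x2 ^ 2 + 48 * x1 * x2 * x3 +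
    9 * x1 * x3 ^ 2 - 4 * x2 ^ 2 * x3

theorem cubic_combination_eq (x1 x2 x3 : ℝ) :
    15 * x1 * cubic₁ x1 x2 x3 + (40 * x2 + 8 * x3) * cubic₂ x1 x2 x3 + 8 * x3 * cubic₃ x1 x2 x3 =
      5 * (27 * x1 ^ 4 + 72 * x1 ^ 3 * x2 + 33 * x1 ^ 2 * x2 ^ 2 + 984 * x1 ^ 2 * x2 * x3 +
        x1 ^ 2 * x3 ^ 2 + 48 * x1 * x2 ^ 3 + 24 * x1 * x2 * x3 ^ 2 + 32 * x2 ^ 3 * x3) := by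
  unfold cubic₁ cubic₂ cubic₃
  ring

theorem cubic_combination_pos {x1 x2 x3 : ℝ} (h1 : 0 < x1) (h2 : 0 < x2) (h3 : 0 < x3) :
    0 < 15 * x1 * cubic₁ x1 x2 x3 + (40 * x2 + 8 * x3) * cubic₂ x1 x2 x3 +
      8 * x3 * cubic₃ x1 x2 x3 := by
  rw [cubic_combination_eq]
  positivity

theorem not_cubics_eq_zero {x1 x2 x3 : ℝ} (h1 : 0 < x1) (h2 : 0 < x2) (h3 : 0 < x3) :
    ¬(cubic₁ x1 x2 x3 = 0 ∧ cubic₂ x1 x2 x3 = 0 ∧ cubic₃ x1 x2 x3 = 0) := by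
  rintro ⟨hF₁, hF₂, hF₃⟩
  have hpos := cubic_combination_pos h1 h2 h3
  rw [hF₁, hF₂, hF₃] at hpos
  simp at hpos

end G2U2

/-- The rescaled normalized Ricci flow on G2/U(2), (d1,d2,d3) = (4,2,4),
has no zero in the open positive octant. -/
theorem stmt_17 :
    let d1 : ℝ := 4
    let d2 : ℝ := 2
    let d3 : ℝ := 4
    let X1 := fun x1 x2 x3 : ℝ =>
      d2 * x1 * (2 * d3 * x1 * ((d1 + d2) * (d2 + d3) * x1 ^ 2 +
          d1 * (d1 + 4 * d2 + 9 * d3) * x1 * x2 -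
          (d1 + d2) * (2 * d1 + d2 + d3) * x2 ^ 2) +
        (-(4 * d1 * (-(2 * d2 ^ 2) + d1 * d3 - 5 * d2 * d3)) * x1 ^ 2 +
          2 * d1 * (2 * d1 + d2 + d3) * (d1 + 4 * d2 + 9 * d3) * x1 * x2 -
          (3 * d1 + 2 * (d2 + d3)) * (-(d2 * d3) + d1 * (d2 + 2 * d3)) * x2 ^ 2) * x3 -
        2 * (d1 + d2) * d3 * (2 * d1 + d2 + d3) * x1 * x3 ^ 2)
    let X2 := fun x1 x2 x3 : ℝ =>
      d1 * x2 * (2 * d3 * x1 * (-((d1 + d2) * (d1 + 2 * d2 + d3)) * x1 ^ 2 +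
          d2 * (d1 + 4 * d2 + 9 * d3) * x1 * x2 +
          (d1 + d2) * (d1 + d3) * x2 ^ 2) +
        (-(4 * (d1 + 2 * d2 + d3) * (-(2 * d2 ^ 2) + d1 * d3 - 5 * d2 * d3)) * x1 ^ 2 +
          2 * d1 * d2 * (d1 + 4 * d2 + 9 * d3) * x1 * x2 +
          (d1 + d3) * (-(d2 * d3) + d1 * (d2 + 2 * d3)) * x2 ^ 2) * x3 -
        2 * (d1 + d2) * d3 * (d1 + 2 * d2 + d3) * x1 * x3 ^ 2)
    let X3 := fun x1 x2 x3 : ℝ =>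
      d1 * d2 * x3 * (-(2 * (d1 + d2 + 2 * d3)) * x1 * ((d1 + d2) * x1 ^ 2 -
          (d1 + 4 * d2 + 9 * d3) * x1 * x2 + (d1 + d2) * x2 ^ 2) +
        (4 * (2 * d2 ^ 2 - d1 * d3 + 5 * d2 * d3) * x1 ^ 2 +
          2 * d1 * (d1 + 4 * d2 + 9 * d3) * x1 * x2 +
          (d2 * d3 - d1 * (d2 + 2 * d3)) * x2 ^ 2) * x3 +
        2 * (d1 + d2) ^ 2 * x1 * x3 ^ 2)
    ∀ x1 x2 x3 : ℝ, 0 < x1 → 0 < x2 → 0 < x3 →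
      ¬(X1 x1 x2 x3 = 0 ∧ X2 x1 x2 x3 = 0 ∧ X3 x1 x2 x3 = 0) := by
  intro d1 d2 d3 X1 X2 X3 x1 x2 x3 hx1 hx2 hx3 ⟨h1, h2, h3⟩
  have hX1 : X1 x1 x2 x3 = 64 * x1 * G2U2.cubic₁ x1 x2 x3 := by
    simp only [X1, d1, d2, d3, G2U2.cubic₁]; ring
  have hX2 : X2 x1 x2 x3 = 256 * x2 * G2U2.cubic₂ x1 x2 x3 := by
    simp only [X2, d1, d2, d3, G2U2.cubic₂]; ring
  have hX3 : X3 x1 x2 x3 = 64 * x3 * G2U2.cubic₃ x1 x2 x3 := by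
    simp only [X3, d1, d2, d3, G2U2.cubic₃]; ring
  exact G2U2.not_cubics_eq_zero hx1 hx2 hx3
    ⟨(mul_eq_zero.mp (hX1 ▸ h1)).resolve_left (by positivity),
      (mul_eq_zero.mp (hX2 ▸ h2)).resolve_left (by positivity),
      (mul_eq_zero.mp (hX3 ▸ h3)).resolve_left (by positivity)⟩
end
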